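/- Let $g \in C^6[0,X]$, $\Delta x > 0$, and $x_i \in [\Delta x, X-\Delta x]$. Define the averaging operator $\mathcal A h = h + \frac{\Delta x^2}{12}\delta_x^2 h$ and the centered second difference $\delta_x^2 h(x_i) = \frac{h(x_i+\Delta x)-2h(x_i)+h(x_i-\Delta x)}{\Delta x^2}$. Then $\mathcal A g''(x_i) = \delta_x^2 g(x_i) + \frac{\Delta x^4}{360}\int_0^1 \big(g^{(6)}(x_i-\eta\Delta x) + g^{(6)}(x_i+\eta\Delta x)\big)\,\xi(\eta)\,d\eta$, where $\xi(\eta) = (1-\eta)^3\big(5-3(1-\eta)^2\big)$. -/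

import Mathlib

/-!
Taylor's formula with integral remainder along the segments `t ↦ x ± t * dx`, applied to `g` at
order 5 and to `g''` at order 3. In the symmetric sums `g (x + dx) + g (x - dx)` and
`g'' (x + dx) + g'' (x - dx)` the odd Taylor terms cancel, and in `𝒜 g'' - δ²g` the even ones
cancel as well, leaving only the two remainders. Their kernels `(1 - t) ^ 3 / 72` and
`(1 - t) ^ 5 / 120` combine to `ξ / 360`.
-/

open Set intervalIntegral
open scoped Nat

def IsDerivChain (f : ℕ → ℝ → ℝ) (n : ℕ) : Prop :=
  (∀ k ≤ n, ContinuousOn (f k) (Icc 0 1)) ∧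
    ∀ k < n, ∀ t ∈ Ioo (0 : ℝ) 1, HasDerivAt (f k) (f (k + 1) t) t

namespace IsDerivChain

variable {f g : ℕ → ℝ → ℝ} {n : ℕ}

theorem mono {m : ℕ} (hf : IsDerivChain f n) (hmn : m ≤ n) : IsDerivChain f m :=
  ⟨fun k hk => hf.1 k (hk.trans hmn), fun k hk => hf.2 k (hk.trans_le hmn)⟩

theorem shift {m : ℕ} (hf : IsDerivChain f (m + n)) : IsDerivChain (fun k => f (m + k)) n :=
  ⟨fun k hk => hf.1 (m + k) (by omega), fun k hk => hf.2 (m + k) (by omega)⟩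

theorem add (hf : IsDerivChain f n) (hg : IsDerivChain g n) :
    IsDerivChain (fun k t => f k t + g k t) n :=
  ⟨fun k hk => (hf.1 k hk).add (hg.1 k hk),
    fun k hk t ht => (hf.2 k hk t ht).add (hg.2 k hk t ht)⟩

theorem intervalIntegrable_pow_div_factorial_mul (hf : IsDerivChain f n) {k : ℕ} (hk : k ≤ n)
    (j : ℕ) : IntervalIntegrable (fun t => (1 - t) ^ j / j ! * f k t) MeasureTheory.volume 0 1 :=
  (Continuous.continuousOn (by fun_prop)).mul (hf.1 k hk) |>.intervalIntegrable_of_Icc zero_le_one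

theorem integral_remainder_succ (hf : IsDerivChain f (n + 2)) :
    ∫ t in (0 : ℝ)..1, (1 - t) ^ n / n ! * f (n + 1) t =
      f (n + 1) 0 / (n + 1)! + ∫ t in (0 : ℝ)..1, (1 - t) ^ (n + 1) / (n + 1)! * f (n + 2) t := by
  have hkernel : ∀ t, HasDerivAt (fun t : ℝ => (1 - t) ^ (n + 1) / (n + 1)!)
      (-((1 - t) ^ n / n !)) t := by
    intro t
    refine ((((hasDerivAt_id' t).const_sub 1).pow (n + 1)).div_const
      ((n + 1)! : ℝ)).congr_deriv ?_
    push_cast [Nat.factorial_succ, Nat.add_sub_cancel]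
    field_simp
  have hparts := integral_mul_deriv_eq_deriv_mul_of_hasDerivAt (a := 0) (b := 1)
    (u := fun t : ℝ => (1 - t) ^ (n + 1) / (n + 1)!) (v := f (n + 1))
    (Continuous.continuousOn (by fun_prop)) (by simpa [uIcc_of_le] using hf.1 (n + 1) (by omega))
    (fun t _ => hkernel t) (fun t ht => hf.2 (n + 1) (by omega) t (by simpa using ht))
    (Continuous.intervalIntegrable (by fun_prop) _ _)
    ((hf.1 (n + 2) le_rfl).intervalIntegrable_of_Icc zero_le_one)
  simp only [integral_neg, neg_mul] at hparts
  rw [hparts]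
  simp [div_eq_inv_mul]

theorem taylor (hf : IsDerivChain f (n + 1)) :
    f 0 1 = ∑ k ∈ Finset.range (n + 1), f k 0 / k ! +
      ∫ t in (0 : ℝ)..1, (1 - t) ^ n / n ! * f (n + 1) t := by
  induction n with
  | zero =>
    have := integral_eq_sub_of_hasDerivAt_of_le zero_le_one (hf.1 0 (by omega))
      (hf.2 0 (by omega)) ((hf.1 1 le_rfl).intervalIntegrable_of_Icc zero_le_one)
    simp [this]
  | succ n ih =>
    rw [ih (hf.mono (by omega)), integral_remainder_succ hf, Finset.sum_range_succ _ (n + 1),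
      add_assoc]

end IsDerivChain

theorem hasDerivAt_iteratedDerivWithin {g : ℝ → ℝ} {s : Set ℝ} {n k : ℕ}
    (hg : ContDiffOn ℝ n g s) (hs : UniqueDiffOn ℝ s) (hk : k < n) {y : ℝ}
    (hy : y ∈ interior s) :
    HasDerivAt (iteratedDerivWithin k g s) (iteratedDerivWithin (k + 1) g s y) y := by
  rw [iteratedDerivWithin_succ]
  exact ((hg.differentiableOn_iteratedDerivWithin (by exact_mod_cast hk) hs) y
    (interior_subset hy)).hasDerivWithinAt.hasDerivAt (mem_interior_iff_mem_nhds.1 hy)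

theorem isDerivChain_iteratedDerivWithin {g : ℝ → ℝ} {s : Set ℝ} {n : ℕ}
    (hg : ContDiffOn ℝ n g s) (hs : UniqueDiffOn ℝ s) {x h : ℝ}
    (hseg : ∀ t ∈ Icc (0 : ℝ) 1, x + t * h ∈ s)
    (hseg' : ∀ t ∈ Ioo (0 : ℝ) 1, x + t * h ∈ interior s) :
    IsDerivChain (fun k t => h ^ k * iteratedDerivWithin k g s (x + t * h)) n := by
  refine ⟨fun k hk => ?_, fun k hk t ht => ?_⟩
  · exact continuousOn_const.mul
      ((hg.continuousOn_iteratedDerivWithin (by exact_mod_cast hk) hs).comp (by fun_prop) hseg)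
  · have hline : HasDerivAt (fun t : ℝ => x + t * h) h t := by
      simpa using ((hasDerivAt_id' t).mul_const h).const_add x
    refine (((hasDerivAt_iteratedDerivWithin hg hs hk (hseg' t ht)).comp t hline).const_mul
      (h ^ k)).congr_deriv ?_
    ring

theorem isDerivChain_symmetric_iteratedDerivWithin_Icc {g : ℝ → ℝ} {a b : ℝ} {n : ℕ}
    (hg : ContDiffOn ℝ n g (Icc a b)) {x h : ℝ} (hh : 0 < h) (hx : x ∈ Icc (a + h) (b - h)) :
    IsDerivChain (fun k t => h ^ k * iteratedDerivWithin k g (Icc a b) (x + t * h) +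
      (-h) ^ k * iteratedDerivWithin k g (Icc a b) (x + t * -h)) n := by
  obtain ⟨hxa, hxb⟩ := hx
  have hs : UniqueDiffOn ℝ (Icc a b) := uniqueDiffOn_Icc (by linarith)
  refine (isDerivChain_iteratedDerivWithin hg hs ?_ ?_).add
    (isDerivChain_iteratedDerivWithin hg hs ?_ ?_) <;>
  · rintro t ⟨ht0, ht1⟩
    try rw [interior_Icc]
    constructor <;> nlinarith

theorem compact_difference_remainder_general (X : ℝ)
    (g : ℝ → ℝ) (hg : ContDiffOn ℝ 6 g (Set.Icc 0 X))
    (dx : ℝ) (hdx : 0 < dx) (x : ℝ) (hx : x ∈ Set.Icc dx (X - dx))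
    (δ2 : (ℝ → ℝ) → ℝ → ℝ)
    (hδ2 : ∀ h y, δ2 h y = (h (y + dx) - 2 * h y + h (y - dx)) / dx ^ 2)
    (A : (ℝ → ℝ) → ℝ → ℝ)
    (hA : ∀ h y, A h y = h y + dx ^ 2 / 12 * δ2 h y)
    (g2 g6 : ℝ → ℝ)
    (hg2 : g2 = iteratedDerivWithin 2 g (Set.Icc 0 X))
    (hg6 : g6 = iteratedDerivWithin 6 g (Set.Icc 0 X)) :
    A g2 x = δ2 g x +
      dx ^ 4 / 360 *
        ∫ η in (0 : ℝ)..1,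
          (g6 (x - η * dx) + g6 (x + η * dx)) * ((1 - η) ^ 3 * (5 - 3 * (1 - η) ^ 2)) := by
  set G : ℕ → ℝ → ℝ := fun k => iteratedDerivWithin k g (Icc 0 X)
  set Φ : ℕ → ℝ → ℝ := fun k t => dx ^ k * G k (x + t * dx) + (-dx) ^ k * G k (x + t * -dx)
  have hΦ : IsDerivChain Φ 6 :=
    isDerivChain_symmetric_iteratedDerivWithin_Icc hg hdx (by simpa using hx)
  have hξ : (∫ η in (0 : ℝ)..1,
      (g6 (x - η * dx) + g6 (x + η * dx)) * ((1 - η) ^ 3 * (5 - 3 * (1 - η) ^ 2))) =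
      (30 * (∫ t in (0 : ℝ)..1, (1 - t) ^ 3 / 3 ! * Φ 6 t) -
        360 * ∫ t in (0 : ℝ)..1, (1 - t) ^ 5 / 5 ! * Φ 6 t) / dx ^ 6 := by
    rw [← integral_const_mul, ← integral_const_mul, ← integral_sub
      ((hΦ.intervalIntegrable_pow_div_factorial_mul le_rfl 3).const_mul _)
      ((hΦ.intervalIntegrable_pow_div_factorial_mul le_rfl 5).const_mul _), ← integral_div]
    refine integral_congr fun t _ => ?_
    simp only [Φ, G, hg6, mul_neg, ← sub_eq_add_neg, Nat.factorial]
    push_cast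
    field_simp
    ring
  have h5 : Φ 0 1 = ∑ k ∈ Finset.range 6, Φ k 0 / k ! +
      ∫ t in (0 : ℝ)..1, (1 - t) ^ 5 / 5 ! * Φ 6 t := hΦ.taylor
  have h3 : Φ 2 1 = ∑ k ∈ Finset.range 4, Φ (2 + k) 0 / k ! +
      ∫ t in (0 : ℝ)..1, (1 - t) ^ 3 / 3 ! * Φ 6 t := (hΦ.shift (m := 2)).taylor
  rw [hA, hδ2, hδ2, hξ]
  generalize (∫ t in (0 : ℝ)..1, (1 - t) ^ 5 / 5 ! * Φ 6 t) = I5 at h5 ⊢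
  generalize (∫ t in (0 : ℝ)..1, (1 - t) ^ 3 / 3 ! * Φ 6 t) = I3 at h3 ⊢
  subst hg2
  norm_num [Φ, G, Finset.sum_range_succ, Nat.factorial, ← sub_eq_add_neg] at h5 h3
  field_simp
  linear_combination 360 * h3 - 4320 * h5

theorem compact_difference_remainder (X : ℝ) (hX : 0 < X)
    (g : ℝ → ℝ) (hg : ContDiffOn ℝ 6 g (Set.Icc 0 X))
    (dx : ℝ) (hdx : 0 < dx) (x : ℝ) (hx : x ∈ Set.Icc dx (X - dx))
    (δ2 : (ℝ → ℝ) → ℝ → ℝ)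
    (hδ2 : ∀ h y, δ2 h y = (h (y + dx) - 2 * h y + h (y - dx)) / dx ^ 2)
    (A : (ℝ → ℝ) → ℝ → ℝ)
    (hA : ∀ h y, A h y = h y + dx ^ 2 / 12 * δ2 h y)
    (g2 g6 : ℝ → ℝ)
    (hg2 : g2 = iteratedDerivWithin 2 g (Set.Icc 0 X))
    (hg6 : g6 = iteratedDerivWithin 6 g (Set.Icc 0 X)) :
    A g2 x = δ2 g x +
      dx ^ 4 / 360 *
        ∫ η in (0 : ℝ)..1,
          (g6 (x - η * dx) + g6 (x + η * dx)) * ((1 - η) ^ 3 * (5 - 3 * (1 - η) ^ 2)) :=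
  compact_difference_remainder_general X g hg dx hdx x hx δ2 hδ2 A hA g2 g6 hg2 hg6
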